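/- Let Γ, α₀, α₁ ∈ [0,1] and let (A, X₁, X₂, S, Y, Z) be {0,1}-valued random variables with joint distribution specified by: P(A=1) = Γ; X₁ is uniform on {0,1} and independent of A; conditionally on (A, X₁), X₂ = X₁ with probability α_A and X₂ = 1 - X₁ with probability 1 - α_A; S is uniform on {0,1} and independent of (A, X₁, X₂); Y = X₁ if S = 0 and Y = X₂ if S = 1; and Z = X₁ if A = 1, Z = 0 if A = 0. Then I(Y; X₁, X₂) = α₁·Γ + α₀·(1 - Γ), where mutual information is computed in bits (logarithm base 2). -/

import Mathlib

open Finset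

/-- Probability that `X` takes the value `b`, under the pmf `p` on the finite sample
space `Ω`. -/
noncomputable def prob {Ω β : Type*} [Fintype Ω] (p : Ω → ℝ) (X : Ω → β) (b : β) : ℝ :=
  haveI := Classical.propDecidable
  ∑ ω, if X ω = b then p ω else 0

/-- Shannon entropy `H(X)` in bits (logarithm base 2). -/
noncomputable def ent2 {Ω β : Type*} [Fintype Ω] [Fintype β] (p : Ω → ℝ) (X : Ω → β) : ℝ :=
  -∑ b, prob p X b * Real.logb 2 (prob p X b)

/-- Conditional entropy `H(X|Y) = H(X,Y) - H(Y)` in bits. -/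
noncomputable def condEnt2 {Ω β γ : Type*} [Fintype Ω] [Fintype β] [Fintype γ]
    (p : Ω → ℝ) (X : Ω → β) (Y : Ω → γ) : ℝ :=
  ent2 p (fun ω => (X ω, Y ω)) - ent2 p Y

/-- Mutual information `I(X;Y) = H(X) + H(Y) - H(X,Y)` in bits. -/
noncomputable def mutInf2 {Ω β γ : Type*} [Fintype Ω] [Fintype β] [Fintype γ]
    (p : Ω → ℝ) (X : Ω → β) (Y : Ω → γ) : ℝ :=
  ent2 p X + ent2 p Y - ent2 p (fun ω => (X ω, Y ω))

/-- Conditional mutual information `I(X;Y|Z) = H(X|Z) + H(Y|Z) - H(X,Y|Z)` in bits. -/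
noncomputable def condMutInf2 {Ω β γ δ : Type*} [Fintype Ω] [Fintype β] [Fintype γ] [Fintype δ]
    (p : Ω → ℝ) (X : Ω → β) (Y : Ω → γ) (Z : Ω → δ) : ℝ :=
  condEnt2 p X Z + condEnt2 p Y Z - condEnt2 p (fun ω => (X ω, Y ω)) Z

/-- The joint pmf of `(A, X₁, X₂, S)` in the deterministic relay-with-actions example:
`P(A=1) = Γ`; `X₁` is uniform on `{0,1}` and independent of `A`; given `(A, X₁)`,
`X₂ = X₁` with probability `α_A` (`α₁` if `A = 1`, `α₀` if `A = 0`) and `X₂ = 1 - X₁`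
otherwise; `S` is uniform on `{0,1}` and independent of `(A, X₁, X₂)`.
A sample point is `ω = (a, x₁, x₂, s)` with `true` playing the role of `1`. -/
noncomputable def relayP (Γ α₀ α₁ : ℝ) : Bool × Bool × Bool × Bool → ℝ :=
  fun ω =>
    (if ω.1 then Γ else 1 - Γ) * (1 / 2) *
      (if ω.2.2.1 = ω.2.1 then (if ω.1 then α₁ else α₀) else 1 - (if ω.1 then α₁ else α₀)) *
      (1 / 2)

/-- The action `A`. -/
def act (ω : Bool × Bool × Bool × Bool) : Bool := ω.1

/-- The input `X₁` of Encoder 1. -/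
def inp1 (ω : Bool × Bool × Bool × Bool) : Bool := ω.2.1

/-- The input `X₂` of Encoder 2 (the relay). -/
def inp2 (ω : Bool × Bool × Bool × Bool) : Bool := ω.2.2.1

/-- The channel output `Y`: equal to `X₁` if the switch `S = 0` and to `X₂` if `S = 1`. -/
def outY (ω : Bool × Bool × Bool × Bool) : Bool := if ω.2.2.2 then ω.2.2.1 else ω.2.1

/-- The cribbed signal `Z`: equal to `X₁` if `A = 1` and constant (`0`) if `A = 0`. -/
def cribZ (ω : Bool × Bool × Bool × Bool) : Bool := if ω.1 then ω.2.1 else false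

/-!
Let `q = P(X₁ = X₂) = α₁Γ + α₀(1 - Γ)`. The output `Y` is uniform, so `H(Y) = 1`; given
`X₁ = X₂` it is determined, while given `X₁ ≠ X₂` it is a fair coin. Hence `H(Y | X₁, X₂) = 1 - q`
and `I(Y; X₁, X₂) = 1 - (1 - q) = q`. The entropy bookkeeping only needs the grouping rule
`2 · (t/2) log(t/2) = t log t - t` for splitting a mass into two halves.
-/

lemma two_mul_half_mul_logb_half (t : ℝ) :
    2 * (t / 2 * Real.logb 2 (t / 2)) = t * Real.logb 2 t - t := by
  rcases eq_or_ne t 0 with rfl | ht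
  · simp
  · rw [Real.logb_div ht two_ne_zero, Real.logb_self_eq_one one_lt_two]
    ring

def agreeProb (Γ α₀ α₁ : ℝ) : ℝ := α₁ * Γ + α₀ * (1 - Γ)

section Relay

variable (Γ α₀ α₁ : ℝ)

lemma prob_outY (y : Bool) : prob (relayP Γ α₀ α₁) outY y = 1 / 2 := by
  cases y <;>
    · simp [prob, relayP, outY, Fintype.sum_prod_type]
      ring

lemma prob_inputs (x₁ x₂ : Bool) :
    prob (relayP Γ α₀ α₁) (fun ω => (inp1 ω, inp2 ω)) (x₁, x₂) =
      if x₁ = x₂ then agreeProb Γ α₀ α₁ / 2 else (1 - agreeProb Γ α₀ α₁) / 2 := by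
  cases x₁ <;> cases x₂ <;>
    · simp [prob, relayP, inp1, inp2, agreeProb, Fintype.sum_prod_type]
      ring

lemma prob_outY_inputs (y x₁ x₂ : Bool) :
    prob (relayP Γ α₀ α₁) (fun ω => (outY ω, (inp1 ω, inp2 ω))) (y, (x₁, x₂)) =
      if x₁ = x₂ then (if y = x₁ then agreeProb Γ α₀ α₁ / 2 else 0)
      else (1 - agreeProb Γ α₀ α₁) / 2 / 2 := by
  cases y <;> cases x₁ <;> cases x₂ <;>
    simp [prob, relayP, outY, inp1, inp2, agreeProb, Fintype.sum_prod_type] <;> ring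

lemma ent2_outY : ent2 (relayP Γ α₀ α₁) outY = 1 := by
  have huniform := two_mul_half_mul_logb_half 1
  rw [Real.logb_one] at huniform
  simp only [ent2, Fintype.sum_bool, prob_outY]
  linarith

lemma condEnt2_outY_inputs :
    condEnt2 (relayP Γ α₀ α₁) outY (fun ω => (inp1 ω, inp2 ω)) = 1 - agreeProb Γ α₀ α₁ := by
  have hdisagree := two_mul_half_mul_logb_half (1 - agreeProb Γ α₀ α₁)
  have hdisagree' := two_mul_half_mul_logb_half ((1 - agreeProb Γ α₀ α₁) / 2)
  simp only [condEnt2, ent2, Fintype.sum_prod_type, Fintype.sum_bool, prob_inputs,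
    prob_outY_inputs, ↓reduceIte, Bool.true_eq_false, Bool.false_eq_true, Real.logb_zero, mul_zero]
  linarith

end Relay

theorem relay_mutInf_output_general (Γ α₀ α₁ : ℝ) :
    mutInf2 (relayP Γ α₀ α₁) outY (fun ω => (inp1 ω, inp2 ω))
      = α₁ * Γ + α₀ * (1 - Γ) := by
  have hcond := condEnt2_outY_inputs Γ α₀ α₁
  rw [condEnt2, agreeProb] at hcond
  rw [mutInf2, ent2_outY]
  linarith

/-- In the deterministic relay-with-actions example,
`I(Y; X₁, X₂) = α₁·Γ + α₀·(1 - Γ)` (in bits). -/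
theorem relay_mutInf_output (Γ α₀ α₁ : ℝ)
    (hΓ : Γ ∈ Set.Icc (0 : ℝ) 1) (hα₀ : α₀ ∈ Set.Icc (0 : ℝ) 1)
    (hα₁ : α₁ ∈ Set.Icc (0 : ℝ) 1) :
    mutInf2 (relayP Γ α₀ α₁) outY (fun ω => (inp1 ω, inp2 ω))
      = α₁ * Γ + α₀ * (1 - Γ) :=
  relay_mutInf_output_general Γ α₀ α₁
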